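/- Let w ∈ ℝⁿ and v ∈ ℝᵏ be vectors with nonnegative entries each summing to 1, let λ > 0, set α = 1/(2λ), and let L be an n×n real matrix and X an n×k real matrix. Then the proximal subproblem min_{Z ∈ Π(w,v)} (1/(2α))‖Z − (I − 2αL)X‖² − λ‖Z‖² admits a minimizer Z* that has at most n + k − 1 nonzero entries. Consequently, with step size α = 1/(2λ), every iterate of the nonconvex accelerated proximal gradient algorithm for the OT-cut problem can be taken to be an extreme point of the transportation polytope and hence has at most n + k − 1 nonzero entries. -/

import Mathlib

/-!
With `α = 1/(2λ)` the coefficient `1/(2α)` equals `λ`, so the quadratic terms cancel and the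
objective `λ‖Z - Y‖² - λ‖Z‖² = λ‖Y‖² - 2λ⟨Z, Y⟩` is affine in `Z`. Its minimum over the compact
polytope `Π(w, v)` is attained on an exposed face, which by Krein–Milman contains an extreme
point `Z`. If `D ≠ 0` has zero row and column sums and vanishes off the support of `Z`, then
`Z ± εD ∈ Π(w, v)` for small `ε > 0`, contradicting extremality. The margins of matrices supported
on a set `S` of entries lie in the hyperplane `{(a, b) | ∑ a = ∑ b}` of dimension `n + k - 1`,
so such a `D` exists as soon as `#S > n + k - 1`.
-/

open Finset Matrix

/-- The transportation polytope `Π(w, v)`: `n × k` real matrices with nonnegative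
entries, row sums `w` and column sums `v`. -/
def transportPolytope {n k : ℕ} (w : Fin n → ℝ) (v : Fin k → ℝ) :
    Set (Matrix (Fin n) (Fin k) ℝ) :=
  {X | (∀ i j, 0 ≤ X i j) ∧ (∀ i, ∑ j, X i j = w i) ∧ (∀ j, ∑ i, X i j = v j)}

/-- Frobenius inner product `⟨A, B⟩ = Tr(Aᵀ B)`. -/
noncomputable def frobInner {n k : ℕ} (A B : Matrix (Fin n) (Fin k) ℝ) : ℝ :=
  Matrix.trace (Aᵀ * B)

/-- Squared Frobenius norm `‖A‖² = ⟨A, A⟩`. -/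
noncomputable def frobNormSq {n k : ℕ} (A : Matrix (Fin n) (Fin k) ℝ) : ℝ :=
  frobInner A A

open Filter Topology

section Margins

variable {K ι κ : Type*} [Field K] [Fintype ι] [Fintype κ]

def margins : Matrix ι κ K →ₗ[K] (ι → K) × (κ → K) where
  toFun D := (fun i => ∑ j, D i j, fun j => ∑ i, D i j)
  map_add' D E := by ext <;> simp [sum_add_distrib]
  map_smul' c D := by ext <;> simp [mul_sum]

def sumFstSubSumSnd : (ι → K) × (κ → K) →ₗ[K] K where
  toFun a := ∑ i, a.1 i - ∑ j, a.2 j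
  map_add' a b := by
    simp only [Prod.fst_add, Prod.snd_add, Pi.add_apply, sum_add_distrib]
    ring
  map_smul' c a := by simp [mul_sum, mul_sub]

theorem sumFstSubSumSnd_margins (D : Matrix ι κ K) : sumFstSubSumSnd (margins D) = 0 := by
  simp [sumFstSubSumSnd, margins, sum_comm (f := fun i j => D i j)]

theorem finrank_ker_sumFstSubSumSnd [Nonempty ι] :
    Module.finrank K (LinearMap.ker (sumFstSubSumSnd : (ι → K) × (κ → K) →ₗ[K] K)) =
      Fintype.card ι + Fintype.card κ - 1 := by
  classical
  have hsurj : Function.Surjective (sumFstSubSumSnd : (ι → K) × (κ → K) →ₗ[K] K) := fun c =>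
    ⟨(Pi.single (Classical.arbitrary ι) c, 0), by simp [sumFstSubSumSnd]⟩
  have hrank := (sumFstSubSumSnd : (ι → K) × (κ → K) →ₗ[K] K).finrank_range_add_finrank_ker
  rw [LinearMap.range_eq_top.2 hsurj, finrank_top, Module.finrank_self, Module.finrank_prod,
    Module.finrank_fintype_fun_eq_card, Module.finrank_fintype_fun_eq_card] at hrank
  omega

theorem exists_ne_zero_margins_eq_zero_of_support [Nonempty ι] (S : Finset (ι × κ))
    (hS : Fintype.card ι + Fintype.card κ - 1 < #S) :
    ∃ D : Matrix ι κ K, D ≠ 0 ∧ margins D = 0 ∧ ∀ p ∉ S, D p.1 p.2 = 0 := by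
  let extend : (S → K) →ₗ[K] Matrix ι κ K := (Matrix.ofLinearEquiv K).toLinearMap ∘ₗ
    (LinearEquiv.curry K K ι κ).toLinearMap ∘ₗ Function.ExtendByZero.linearMap K Subtype.val
  have hker : LinearMap.ker ((margins ∘ₗ extend).codRestrict (LinearMap.ker sumFstSubSumSnd)
      fun _ => sumFstSubSumSnd_margins _) ≠ ⊥ := by
    apply LinearMap.ker_ne_bot_of_finrank_lt
    rwa [finrank_ker_sumFstSubSumSnd, Module.finrank_fintype_fun_eq_card, Fintype.card_coe]
  obtain ⟨d, hd, hd0⟩ := Submodule.exists_mem_ne_zero_of_ne_bot hker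
  refine ⟨extend d, fun h => hd0 ?_, congrArg Subtype.val (LinearMap.mem_ker.1 hd), fun p hp => ?_⟩
  · ext p
    have : Function.extend Subtype.val d 0 p.1 = 0 := congrFun₂ h p.1.1 p.1.2
    rwa [Subtype.val_injective.extend_apply] at this
  · show Function.extend Subtype.val d 0 p = 0
    exact Function.extend_apply' _ _ _ (by simpa using hp)

end Margins

theorem exists_pos_forall_mul_abs_le {ι : Type*} [Finite ι] {f g : ι → ℝ}
    (hf : ∀ i, 0 ≤ f i) (hfg : ∀ i, g i ≠ 0 → 0 < f i) :
    ∃ ε > 0, ∀ i, ε * |g i| ≤ f i := by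
  have h : ∀ i, ∀ᶠ ε in 𝓝[>] (0 : ℝ), ε * |g i| ≤ f i := fun i => by
    by_cases hgi : g i = 0
    · simp [hgi, hf i]
    · have : Tendsto (fun ε => ε * |g i|) (𝓝[>] (0 : ℝ)) (𝓝 0) :=
        ((continuous_mul_const _).tendsto' 0 0 (zero_mul _)).mono_left nhdsWithin_le_nhds
      exact this.eventually (ge_mem_nhds (hfg i hgi))
  exact ((eventually_all.2 h).and self_mem_nhdsWithin).exists.imp fun ε h => ⟨h.2, h.1⟩

theorem IsCompact.exists_mem_extremePoints_isMaxOn {E : Type*} [AddCommGroup E] [Module ℝ E]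
    [TopologicalSpace E] [T2Space E] [IsTopologicalAddGroup E] [ContinuousSMul ℝ E]
    [LocallyConvexSpace ℝ E] {s : Set E} (hs : IsCompact s) (hne : s.Nonempty)
    (l : StrongDual ℝ E) : ∃ x ∈ s.extremePoints ℝ, IsMaxOn l s x := by
  have hexp : IsExposed ℝ s (l.toExposed s) := ContinuousLinearMap.toExposed.isExposed
  obtain ⟨y, hys, hy⟩ := hs.exists_isMaxOn hne l.continuous.continuousOn
  obtain ⟨x, hx⟩ := (hexp.isCompact hs).extremePoints_nonempty ⟨y, hys, fun z hz => hy hz⟩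
  exact ⟨x, hexp.isExtreme.extremePoints_subset_extremePoints hx,
    fun z hz => (extremePoints_subset hx).2 z hz⟩

section TransportPolytope

variable {n k : ℕ} {w : Fin n → ℝ} {v : Fin k → ℝ}

theorem transportPolytope_nonempty (hw : ∀ i, 0 ≤ w i) (hv : ∀ j, 0 ≤ v j)
    (hw1 : ∑ i, w i = 1) (hv1 : ∑ j, v j = 1) : (transportPolytope w v).Nonempty :=
  ⟨of fun i j => w i * v j, fun i j => mul_nonneg (hw i) (hv j),
    fun i => by simp [← mul_sum, hv1], fun j => by simp [← sum_mul, hw1]⟩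

theorem isCompact_transportPolytope : IsCompact (transportPolytope w v) := by
  have hclosed : IsClosed (transportPolytope w v) := by
    simp only [transportPolytope, Set.ofPred_and, Set.ofPred_forall]
    refine .inter (isClosed_iInter fun i => isClosed_iInter fun j => isClosed_le ?_ ?_)
      (.inter (isClosed_iInter fun i => isClosed_eq ?_ ?_)
        (isClosed_iInter fun j => isClosed_eq ?_ ?_)) <;> fun_prop
  have hbox : IsCompact (Set.univ.pi fun i => Set.univ.pi fun _ : Fin k => Set.Icc (0 : ℝ) (w i)) :=
    isCompact_univ_pi fun _ => isCompact_univ_pi fun _ => isCompact_Icc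
  refine hbox.of_isClosed_subset hclosed fun X ⟨hpos, hrow, _⟩ i _ j _ => ⟨hpos i j, ?_⟩
  exact hrow i ▸ single_le_sum (fun j _ => hpos i j) (mem_univ j)

theorem add_smul_mem_transportPolytope {Z D : Matrix (Fin n) (Fin k) ℝ} {t : ℝ}
    (hZ : Z ∈ transportPolytope w v) (hD : margins D = 0) (hle : ∀ i j, |t| * |D i j| ≤ Z i j) :
    Z + t • D ∈ transportPolytope w v := by
  obtain ⟨hpos, hrow, hcol⟩ := hZ
  have hDrow (i : Fin n) : ∑ j, D i j = 0 := congrFun (congrArg Prod.fst hD) i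
  have hDcol (j : Fin k) : ∑ i, D i j = 0 := congrFun (congrArg Prod.snd hD) j
  refine ⟨fun i j => ?_, fun i => ?_, fun j => ?_⟩
  · have := neg_abs_le (t * D i j)
    rw [abs_mul] at this
    simp only [Matrix.add_apply, Matrix.smul_apply, smul_eq_mul]
    linarith [hle i j]
  · simp [sum_add_distrib, ← mul_sum, hDrow, hrow]
  · simp [sum_add_distrib, ← mul_sum, hDcol, hcol]

theorem eq_zero_of_mem_extremePoints_transportPolytope {Z D : Matrix (Fin n) (Fin k) ℝ}
    (hZ : Z ∈ (transportPolytope w v).extremePoints ℝ) (hD : margins D = 0)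
    (hsupp : ∀ i j, D i j ≠ 0 → Z i j ≠ 0) : D = 0 := by
  obtain ⟨ε, hε, hle⟩ := exists_pos_forall_mul_abs_le (f := fun p : Fin n × Fin k => Z p.1 p.2)
    (g := fun p => D p.1 p.2) (fun p => hZ.1.1 p.1 p.2)
    fun p hp => (hZ.1.1 p.1 p.2).lt_of_ne' (hsupp p.1 p.2 hp)
  have hmem (t : ℝ) (ht : |t| = ε) : Z + t • D ∈ transportPolytope w v :=
    add_smul_mem_transportPolytope hZ.1 hD fun i j => ht ▸ hle (i, j)
  have hsub : Z - ε • D ∈ transportPolytope w v := by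
    simpa [sub_eq_add_neg] using hmem (-ε) (by simp [hε.le])
  have := hZ.2 (hmem ε (abs_of_pos hε)) hsub (mem_openSegment_add_sub Z (ε • D))
  simpa [hε.ne'] using this

theorem card_support_le_of_mem_extremePoints_transportPolytope [NeZero n]
    {Z : Matrix (Fin n) (Fin k) ℝ} (hZ : Z ∈ (transportPolytope w v).extremePoints ℝ) :
    #{p : Fin n × Fin k | Z p.1 p.2 ≠ 0} ≤ n + k - 1 := by
  by_contra! h
  obtain ⟨D, hD0, hD, hDS⟩ := exists_ne_zero_margins_eq_zero_of_support (K := ℝ)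
    {p | Z p.1 p.2 ≠ 0} (by simpa using h)
  refine hD0 (eq_zero_of_mem_extremePoints_transportPolytope hZ hD fun i j hDij hZij => hDij ?_)
  exact hDS (i, j) (by simp [hZij])

end TransportPolytope

section Frobenius

variable {n k : ℕ}

theorem frobInner_comm (A B : Matrix (Fin n) (Fin k) ℝ) : frobInner A B = frobInner B A := by
  rw [frobInner, ← trace_transpose, transpose_mul, transpose_transpose, frobInner]

theorem frobNormSq_sub (A B : Matrix (Fin n) (Fin k) ℝ) :
    frobNormSq (A - B) = frobNormSq A - 2 * frobInner A B + frobNormSq B := by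
  have hBA : frobInner B A = frobInner A B := frobInner_comm B A
  simp only [frobNormSq, frobInner, transpose_sub, Matrix.sub_mul, Matrix.mul_sub,
    trace_sub] at hBA ⊢
  linear_combination -hBA

noncomputable def frobInnerCLM (Y : Matrix (Fin n) (Fin k) ℝ) :
    StrongDual ℝ (Matrix (Fin n) (Fin k) ℝ) :=
  LinearMap.toContinuousLinearMap
    { toFun := (frobInner · Y)
      map_add' := by simp [frobInner, Matrix.add_mul]
      map_smul' := by simp [frobInner] }

@[simp]
theorem frobInnerCLM_apply (Y Z : Matrix (Fin n) (Fin k) ℝ) : frobInnerCLM Y Z = frobInner Z Y :=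
  rfl

theorem mul_frobNormSq_sub_sub_mul_frobNormSq (c : ℝ) (Z Y : Matrix (Fin n) (Fin k) ℝ) :
    c * frobNormSq (Z - Y) - c * frobNormSq Z = c * frobNormSq Y - 2 * (c • frobInnerCLM Y) Z := by
  rw [frobNormSq_sub, _root_.smul_apply, frobInnerCLM_apply, smul_eq_mul]
  ring

end Frobenius

theorem prox_subproblem_sparse_minimizer_general {n k : ℕ}
    (w : Fin n → ℝ) (v : Fin k → ℝ)
    (hw : ∀ i, 0 ≤ w i) (hv : ∀ j, 0 ≤ v j)
    (hw1 : ∑ i, w i = 1) (hv1 : ∑ j, v j = 1)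
    (lam : ℝ) (α : ℝ) (hα : α = 1 / (2 * lam))
    (L : Matrix (Fin n) (Fin n) ℝ) (X : Matrix (Fin n) (Fin k) ℝ) :
    ∃ Zstar ∈ transportPolytope w v,
      (∀ Z ∈ transportPolytope w v,
        (1 / (2 * α)) * frobNormSq (Zstar - ((1 : Matrix (Fin n) (Fin n) ℝ) - (2 * α) • L) * X)
            - lam * frobNormSq Zstar
          ≤ (1 / (2 * α)) * frobNormSq (Z - ((1 : Matrix (Fin n) (Fin n) ℝ) - (2 * α) • L) * X)
            - lam * frobNormSq Z) ∧
      Zstar ∈ Set.extremePoints ℝ (transportPolytope w v) ∧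
      (Finset.univ.filter (fun p : Fin n × Fin k => Zstar p.1 p.2 ≠ 0)).card ≤ n + k - 1 := by
  have : NeZero n := ⟨by rintro rfl; simp at hw1⟩
  have : LocallyConvexSpace ℝ (Matrix (Fin n) (Fin k) ℝ) :=
    inferInstanceAs (LocallyConvexSpace ℝ (Fin n → Fin k → ℝ))
  have hcoef : 1 / (2 * α) = lam := by
    rw [hα, one_div, one_div, mul_inv, inv_inv]
    ring
  set Y := ((1 : Matrix (Fin n) (Fin n) ℝ) - (2 * α) • L) * X
  obtain ⟨Zstar, hext, hmax⟩ := isCompact_transportPolytope.exists_mem_extremePoints_isMaxOn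
    (transportPolytope_nonempty hw hv hw1 hv1) (lam • frobInnerCLM Y)
  refine ⟨Zstar, hext.1, fun Z hZ => ?_, hext,
    card_support_le_of_mem_extremePoints_transportPolytope hext⟩
  rw [hcoef, mul_frobNormSq_sub_sub_mul_frobNormSq, mul_frobNormSq_sub_sub_mul_frobNormSq]
  linarith [isMaxOn_iff.1 hmax Z hZ]

/-- **Sparse minimizers of the proximal subproblem.**
For probability vectors `w`, `v`, `λ > 0` and `α = 1/(2λ)`, the proximal subproblem
`min_{Z ∈ Π(w,v)} (1/(2α))‖Z − (I − 2αL)X‖² − λ‖Z‖²` admits a minimizer `Z*` that is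
an extreme point of the transportation polytope and hence has at most `n + k − 1`
nonzero entries. -/
theorem prox_subproblem_sparse_minimizer {n k : ℕ}
    (w : Fin n → ℝ) (v : Fin k → ℝ)
    (hw : ∀ i, 0 ≤ w i) (hv : ∀ j, 0 ≤ v j)
    (hw1 : ∑ i, w i = 1) (hv1 : ∑ j, v j = 1)
    (lam : ℝ) (hlam : 0 < lam) (α : ℝ) (hα : α = 1 / (2 * lam))
    (L : Matrix (Fin n) (Fin n) ℝ) (X : Matrix (Fin n) (Fin k) ℝ) :
    ∃ Zstar ∈ transportPolytope w v,
      (∀ Z ∈ transportPolytope w v,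
        (1 / (2 * α)) * frobNormSq (Zstar - ((1 : Matrix (Fin n) (Fin n) ℝ) - (2 * α) • L) * X)
            - lam * frobNormSq Zstar
          ≤ (1 / (2 * α)) * frobNormSq (Z - ((1 : Matrix (Fin n) (Fin n) ℝ) - (2 * α) • L) * X)
            - lam * frobNormSq Z) ∧
      Zstar ∈ Set.extremePoints ℝ (transportPolytope w v) ∧
      (Finset.univ.filter (fun p : Fin n × Fin k => Zstar p.1 p.2 ≠ 0)).card ≤ n + k - 1 :=
  prox_subproblem_sparse_minimizer_general w v hw hv hw1 hv1 lam α hα L X
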